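/- For all real x ≥ 0, |cos((π/2)·√x)| ≤ |1 - x|. -/

import Mathlib

/-!
Put `t = √x`. For `0 ≤ t ≤ 1`, write `cos (π t / 2) = 1 - 2 sin² (π t / 4)`; concavity of `sin`
on `[0, π]` gives `sin (π t / 4) ≥ t sin (π / 4) = t / √2`, hence `cos (π t / 2) ≤ 1 - t²`.
For `t ≥ 1`, `|cos (π t / 2)| = |sin (π (1 - t) / 2)| ≤ π (t - 1) / 2 ≤ (t + 1) (t - 1)`.
-/

open Real

namespace Real

lemma mul_sin_le_sin_mul {t x : ℝ} (ht₀ : 0 ≤ t) (ht₁ : t ≤ 1) (hx₀ : 0 ≤ x) (hxπ : x ≤ π) :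
    t * sin x ≤ sin (t * x) := by
  simpa using strictConcaveOn_sin_Icc.concaveOn.2 ⟨le_rfl, pi_pos.le⟩ ⟨hx₀, hxπ⟩
    (sub_nonneg.2 ht₁) ht₀

lemma cos_pi_div_two_mul_le_one_sub_sq {t : ℝ} (ht₀ : 0 ≤ t) (ht₁ : t ≤ 1) :
    cos (π / 2 * t) ≤ 1 - t ^ 2 := by
  have hsin : t * (√2 / 2) ≤ sin (t * (π / 4)) := by
    rw [← sin_pi_div_four]
    exact mul_sin_le_sin_mul ht₀ ht₁ (by positivity) (by linarith [pi_pos])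
  have hsq : t ^ 2 / 2 ≤ sin (t * (π / 4)) ^ 2 :=
    calc t ^ 2 / 2 = (t * (√2 / 2)) ^ 2 := by
          rw [mul_pow, div_pow, sq_sqrt zero_le_two]; ring
      _ ≤ _ := pow_le_pow_left₀ (by positivity) hsin 2
  calc cos (π / 2 * t) = 1 - 2 * sin (t * (π / 4)) ^ 2 := by
        rw [show π / 2 * t = 2 * (t * (π / 4)) by ring, cos_two_mul, cos_sq']
        ring
    _ ≤ 1 - t ^ 2 := by linarith

lemma abs_cos_pi_div_two_mul_le_sq_sub_one {t : ℝ} (ht : 1 ≤ t) :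
    |cos (π / 2 * t)| ≤ t ^ 2 - 1 :=
  calc |cos (π / 2 * t)| = |sin (π / 2 * (1 - t))| := by
        rw [mul_one_sub, sin_pi_div_two_sub]
    _ ≤ |π / 2 * (1 - t)| := abs_sin_le_abs
    _ = π / 2 * (t - 1) := by
        rw [abs_mul, abs_of_pos pi_div_two_pos, abs_sub_comm, abs_of_nonneg (sub_nonneg.2 ht)]
    _ ≤ (t + 1) * (t - 1) := by
        gcongr
        linarith [pi_le_four]
    _ = t ^ 2 - 1 := by ring

lemma abs_cos_pi_div_two_mul_le_abs_one_sub_sq (t : ℝ) :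
    |cos (π / 2 * t)| ≤ |1 - t ^ 2| := by
  wlog ht₀ : 0 ≤ t generalizing t
  · simpa using this (-t) (by linarith)
  rcases le_total t 1 with ht₁ | ht₁
  · have hcos : 0 ≤ cos (π / 2 * t) :=
      cos_nonneg_of_mem_Icc ⟨by nlinarith [pi_pos], by nlinarith [pi_pos]⟩
    rw [abs_of_nonneg hcos, abs_of_nonneg (by nlinarith)]
    exact cos_pi_div_two_mul_le_one_sub_sq ht₀ ht₁
  · rw [abs_of_nonpos (a := 1 - t ^ 2) (by nlinarith), neg_sub]
    exact abs_cos_pi_div_two_mul_le_sq_sub_one ht₁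

end Real

theorem stmt0 (x : ℝ) (hx : 0 ≤ x) :
    |Real.cos (π / 2 * Real.sqrt x)| ≤ |1 - x| := by
  simpa [sq_sqrt hx] using abs_cos_pi_div_two_mul_le_abs_one_sub_sq (√x)
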